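/- Let d ≥ 1 and let x₁,…,x_n be n points in a metric measure space (X, dist, ν) with ν a probability measure such that every ball of radius r ≤ r₀ has ν-measure at most C·r^d. Then the 2-Wasserstein distance satisfies W₂((1/n)Σ_k δ_{x_k}, ν) ≥ c · n^{-1/d} for constants c > 0, depending only on C, d, r₀ (and n large enough). -/

import Mathlib

/-!
The mass of `μ = (1/n) Σ δ_{x_k}` sits on the finite set `S = {x_k}`, so any coupling of `μ` and
`ν` moves the `ν`-mass outside the `δ`-thickening of `S` by at least `δ`; hence
`W_p(μ, ν) ≥ δ · ν(S_δᶜ)^{1/p}`. The thickening is a union of `n` balls, so upper regularity gives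
`ν(S_δ) ≤ n C δ^d`, which is at most `1/2` for `δ = a n^{-1/d}` with `C a^d ≤ 1/2`.
-/

open Real MeasureTheory Metric
open scoped ENNReal

/-- The `p`-Wasserstein distance (as an extended real), defined via couplings. -/
noncomputable def Wp {X : Type*} [MeasurableSpace X] [PseudoMetricSpace X]
    (p : ℝ) (μ ν : Measure X) : ℝ≥0∞ :=
  ⨅ (γ : Measure (X × X)) (_ : γ.map Prod.fst = μ) (_ : γ.map Prod.snd = ν),
    (∫⁻ z, edist z.1 z.2 ^ p ∂γ) ^ (1 / p)

open Set

section Transport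

variable {X : Type*} [MeasurableSpace X] [PseudoMetricSpace X] [OpensMeasurableSpace X]

theorem ofReal_rpow_mul_map_snd_compl_thickening_le_lintegral {γ : Measure (X × X)} {S : Set X}
    {p δ : ℝ} (hp : 0 ≤ p) (hS : γ.map Prod.fst Sᶜ = 0) :
    ENNReal.ofReal δ ^ p * γ.map Prod.snd (thickening δ S)ᶜ ≤ ∫⁻ z, edist z.1 z.2 ^ p ∂γ := by
  have hfst : ∀ᵐ z ∂γ, z.1 ∈ S :=
    ae_iff.2 (le_zero_iff.1 ((Measure.le_map_apply measurable_fst.aemeasurable Sᶜ).trans hS.le))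
  have hT : MeasurableSet (thickening δ S)ᶜ := isOpen_thickening.measurableSet.compl
  rw [Measure.map_apply measurable_snd hT, ← lintegral_indicator_const (measurable_snd hT)]
  refine lintegral_mono_ae (hfst.mono fun z hz => ?_)
  by_cases hzT : z ∈ Prod.snd ⁻¹' (thickening δ S)ᶜ
  · rw [indicator_of_mem hzT]
    gcongr
    calc ENNReal.ofReal δ ≤ infEDist z.2 S := not_lt.1 hzT
      _ ≤ edist z.2 z.1 := infEDist_le_edist_of_mem hz
      _ = edist z.1 z.2 := edist_comm _ _
  · rw [indicator_of_notMem hzT]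
    exact zero_le

theorem ofReal_mul_measure_compl_thickening_rpow_le_Wp {μ ν : Measure X} {S : Set X}
    {p δ : ℝ} (hp : 0 < p) (hS : μ Sᶜ = 0) :
    ENNReal.ofReal δ * ν (thickening δ S)ᶜ ^ (1 / p) ≤ Wp p μ ν := by
  refine le_iInf₂ fun γ hμ => le_iInf fun hν => ?_
  subst hμ hν
  calc ENNReal.ofReal δ * γ.map Prod.snd (thickening δ S)ᶜ ^ (1 / p)
      = (ENNReal.ofReal δ ^ p * γ.map Prod.snd (thickening δ S)ᶜ) ^ (1 / p) := by
        rw [ENNReal.mul_rpow_of_nonneg _ _ (by positivity), ← ENNReal.rpow_mul,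
          mul_one_div_cancel hp.ne', ENNReal.rpow_one]
    _ ≤ _ := by
        gcongr
        exact ofReal_rpow_mul_map_snd_compl_thickening_le_lintegral hp.le hS

end Transport

theorem measure_thickening_range_le {X ι : Type*} [MeasurableSpace X] [PseudoMetricSpace X]
    [Fintype ι] (ν : Measure X) (x : ι → X) {δ : ℝ} {m : ℝ≥0∞}
    (h : ∀ k, ν (ball (x k) δ) ≤ m) :
    ν (thickening δ (range x)) ≤ Fintype.card ι * m := by
  rw [thickening_eq_biUnion_ball, biUnion_range]
  calc ν (⋃ k, ball (x k) δ) ≤ ∑ k, ν (ball (x k) δ) := measure_iUnion_fintype_le _ _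
    _ ≤ ∑ _k : ι, m := Finset.sum_le_sum fun k _ => h k
    _ = Fintype.card ι * m := by simp

theorem smul_sum_dirac_compl_range {X ι : Type*} [MeasurableSpace X] [MeasurableSingletonClass X]
    [Fintype ι] (c : ℝ≥0∞) (x : ι → X) :
    (c • ∑ k, Measure.dirac (x k)) (range x)ᶜ = 0 := by
  have hm : MeasurableSet (range x)ᶜ := (finite_range x).measurableSet.compl
  simp [Measure.dirac_apply' _ hm]

theorem exists_pos_le_and_mul_pow_le {C r₀ ε : ℝ} (hC : 0 < C) (hr₀ : 0 < r₀) (hε : 0 < ε)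
    {d : ℕ} (hd : d ≠ 0) : ∃ a, 0 < a ∧ a ≤ r₀ ∧ C * a ^ d ≤ ε := by
  set a := min r₀ (min 1 (ε / C))
  have ha : 0 < a := lt_min hr₀ (lt_min one_pos (by positivity))
  refine ⟨a, ha, min_le_left _ _, ?_⟩
  calc C * a ^ d ≤ C * (ε / C) := by
        gcongr
        exact (pow_le_of_le_one ha.le ((min_le_right _ _).trans (min_le_left _ _)) hd).trans
          ((min_le_right _ _).trans (min_le_right _ _))
    _ = ε := by field_simp

theorem inv_two_le_measure_compl_thickening_range {X : Type*} [MeasurableSpace X]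
    [PseudoMetricSpace X] [OpensMeasurableSpace X] {ν : Measure X} [IsProbabilityMeasure ν]
    {d : ℕ} (hd : d ≠ 0) {C r₀ a : ℝ}
    (hreg : ∀ (x : X) (r : ℝ), 0 < r → r ≤ r₀ → ν (ball x r) ≤ ENNReal.ofReal (C * r ^ d))
    (ha : 0 < a) (har₀ : a ≤ r₀) (hCa : C * a ^ d ≤ 1 / 2) {n : ℕ} (hn : 1 ≤ n)
    (x : Fin n → X) : 2⁻¹ ≤ ν (thickening (a * (n : ℝ) ^ (-(1 : ℝ) / d)) (range x))ᶜ := by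
  have hn' : (1 : ℝ) ≤ n := by exact_mod_cast hn
  set δ := a * (n : ℝ) ^ (-(1 : ℝ) / d)
  have hδ : 0 < δ := by positivity
  have hδr₀ : δ ≤ r₀ := by
    refine (mul_le_of_le_one_right ha.le (rpow_le_one_of_one_le_of_nonpos hn' ?_)).trans har₀
    exact div_nonpos_of_nonpos_of_nonneg (by norm_num) (Nat.cast_nonneg d)
  have hnδ : (n : ℝ) * (C * δ ^ d) = C * a ^ d := by
    rw [mul_pow, ← rpow_natCast ((n : ℝ) ^ _) d, ← rpow_mul (by positivity),
      div_mul_cancel₀ _ (Nat.cast_ne_zero.2 hd), rpow_neg_one]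
    field_simp
  have hthick : ν (thickening δ (range x)) ≤ 2⁻¹ :=
    calc ν (thickening δ (range x)) ≤ n * ENNReal.ofReal (C * δ ^ d) := by
          simpa using measure_thickening_range_le ν x fun k => hreg (x k) δ hδ hδr₀
      _ = ENNReal.ofReal (C * a ^ d) := by
          rw [← hnδ, ENNReal.ofReal_mul (Nat.cast_nonneg n), ENNReal.ofReal_natCast]
      _ ≤ 2⁻¹ := by simpa [ENNReal.ofReal_inv_of_pos] using ENNReal.ofReal_le_ofReal hCa
  rw [prob_compl_eq_one_sub isOpen_thickening.measurableSet, ← ENNReal.one_sub_inv_two]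
  gcongr

/-- Lower bound for the Wasserstein distance of `n` Dirac masses to an upper-regular
probability measure: if `ν(B(x,r)) ≤ C r^d` for all `r ≤ r₀`, then
`W₂((1/n) Σ δ_{x_k}, ν) ≥ c n^{-1/d}` for all large `n`, with `c = c(C, d, r₀)`. -/
theorem stmt10 {X : Type*} [MeasurableSpace X] [MetricSpace X] [BorelSpace X]
    (d : ℕ) (hd : 1 ≤ d) (ν : Measure X) [IsProbabilityMeasure ν]
    (C r₀ : ℝ) (hC : 0 < C) (hr₀ : 0 < r₀)
    (hreg : ∀ (x : X) (r : ℝ), 0 < r → r ≤ r₀ →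
      ν (Metric.ball x r) ≤ ENNReal.ofReal (C * r ^ d)) :
    ∃ c : ℝ, 0 < c ∧ ∃ n₀ : ℕ, ∀ n : ℕ, n₀ ≤ n → ∀ x : Fin n → X,
      ENNReal.ofReal (c * (n : ℝ) ^ (-(1 : ℝ) / d))
        ≤ Wp 2 ((n : ℝ≥0∞)⁻¹ • ∑ k : Fin n, Measure.dirac (x k)) ν := by
  have hd₀ : d ≠ 0 := Nat.one_le_iff_ne_zero.1 hd
  obtain ⟨a, ha, har₀, hCa⟩ := exists_pos_le_and_mul_pow_le hC hr₀ (one_half_pos (α := ℝ)) hd₀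
  refine ⟨a / 2, by positivity, 1, fun n hn x => ?_⟩
  set δ := a * (n : ℝ) ^ (-(1 : ℝ) / d)
  calc ENNReal.ofReal (a / 2 * (n : ℝ) ^ (-(1 : ℝ) / d)) = ENNReal.ofReal δ * 2⁻¹ := by
        rw [div_mul_eq_mul_div, ENNReal.ofReal_div_of_pos two_pos, div_eq_mul_inv,
          ENNReal.ofReal_ofNat]
    _ ≤ ENNReal.ofReal δ * 2⁻¹ ^ (1 / 2 : ℝ) := by
        gcongr
        simpa using ENNReal.rpow_le_rpow_of_exponent_ge (x := 2⁻¹) (by norm_num)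
          (show (1 / 2 : ℝ) ≤ 1 by norm_num)
    _ ≤ ENNReal.ofReal δ * ν (thickening δ (range x))ᶜ ^ (1 / 2 : ℝ) := by
        gcongr
        exact inv_two_le_measure_compl_thickening_range hd₀ hreg ha har₀ hCa hn x
    _ ≤ _ := ofReal_mul_measure_compl_thickening_rpow_le_Wp two_pos
          (smul_sum_dirac_compl_range _ x)
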